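/- For the c-step nilpotent Lie algebra n_{Γ,c}^K associated to a graph Γ over K ⊂ ℂ, the subgroups of GL(V) obtained as images under the abelianization map p of: (a) graded automorphisms of g_Γ^K preserving V, (b) graded automorphisms of n_{Γ,c}^K preserving V, (c) all automorphisms of g_Γ^K, and (d) all automorphisms of n_{Γ,c}^K, are all equal; moreover p restricted to the graded automorphism groups T_Γ and T_{Γ,c} is injective. -/

import Mathlib

/-- The ideal `I_Γ` of the free Lie algebra on the vertices generated by the brackets of
non-adjacent vertices. -/
noncomputable def graphIdeal (K : Type) [Field K] {S : Type} (G : SimpleGraph S) :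
    LieIdeal K (FreeLieAlgebra K S) :=
  LieSubmodule.lieSpan K (FreeLieAlgebra K S)
    {x | ∃ a b : S, ¬ G.Adj a b ∧ x = ⁅FreeLieAlgebra.of K a, FreeLieAlgebra.of K b⁆}

/-- The Lie algebra `g_Γ^K` associated to the graph `Γ` over the field `K`. -/
def graphLieAlgebra (K : Type) [Field K] {S : Type} (G : SimpleGraph S) : Type :=
  FreeLieAlgebra K S ⧸ graphIdeal K G

noncomputable instance (K : Type) [Field K] {S : Type} (G : SimpleGraph S) :
    LieRing (graphLieAlgebra K G) :=
  inferInstanceAs (LieRing (FreeLieAlgebra K S ⧸ graphIdeal K G))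

noncomputable instance (K : Type) [Field K] {S : Type} (G : SimpleGraph S) :
    LieAlgebra K (graphLieAlgebra K G) :=
  inferInstanceAs (LieAlgebra K (FreeLieAlgebra K S ⧸ graphIdeal K G))

/-- The `c`-step nilpotent Lie algebra `n_{Γ,c}^K` associated to the graph `Γ` over `K`:
the quotient of `g_Γ^K` by `γ_{c+1}(g_Γ^K)` (note that in Mathlib's indexing
`LieModule.lowerCentralSeries K g g c = γ_{c+1}`). -/
def graphNilpotentLieAlgebra (K : Type) [Field K] {S : Type} (G : SimpleGraph S) (c : ℕ) :
    Type :=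
  graphLieAlgebra K G ⧸
    LieModule.lowerCentralSeries K (graphLieAlgebra K G) (graphLieAlgebra K G) c

noncomputable instance (K : Type) [Field K] {S : Type} (G : SimpleGraph S) (c : ℕ) :
    LieRing (graphNilpotentLieAlgebra K G c) :=
  inferInstanceAs (LieRing (graphLieAlgebra K G ⧸
    LieModule.lowerCentralSeries K (graphLieAlgebra K G) (graphLieAlgebra K G) c))

noncomputable instance (K : Type) [Field K] {S : Type} (G : SimpleGraph S) (c : ℕ) :
    LieAlgebra K (graphNilpotentLieAlgebra K G c) :=
  inferInstanceAs (LieAlgebra K (graphLieAlgebra K G ⧸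
    LieModule.lowerCentralSeries K (graphLieAlgebra K G) (graphLieAlgebra K G) c))

/-- The image of a vertex in `n_{Γ,c}^K`. -/
noncomputable def graphVertex (K : Type) [Field K] {S : Type} (G : SimpleGraph S) (c : ℕ)
    (s : S) : graphNilpotentLieAlgebra K G c :=
  LieSubmodule.Quotient.mk' _ (LieSubmodule.Quotient.mk' (graphIdeal K G) (FreeLieAlgebra.of K s))

/-- The image of a vertex in `g_Γ^K`. -/
noncomputable def graphVertexInf (K : Type) [Field K] {S : Type} (G : SimpleGraph S)
    (s : S) : graphLieAlgebra K G :=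
  LieSubmodule.Quotient.mk' (graphIdeal K G) (FreeLieAlgebra.of K s)

/-- An automorphism of `g_Γ^K` is graded if it preserves the span `V` of the vertices. -/
def IsGradedAutInf (K : Type) [Field K] {S : Type} (G : SimpleGraph S)
    (f : graphLieAlgebra K G ≃ₗ⁅K⁆ graphLieAlgebra K G) : Prop :=
  Submodule.map (f : graphLieAlgebra K G ≃ₗ[K] graphLieAlgebra K G).toLinearMap
    (Submodule.span K (Set.range (graphVertexInf K G))) =
  Submodule.span K (Set.range (graphVertexInf K G))

/-- An automorphism of `n_{Γ,c}^K` is graded if it preserves the span `V` of the vertices. -/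
def IsGradedAutNil (K : Type) [Field K] {S : Type} (G : SimpleGraph S) (c : ℕ)
    (f : graphNilpotentLieAlgebra K G c ≃ₗ⁅K⁆ graphNilpotentLieAlgebra K G c) : Prop :=
  Submodule.map
    (f : graphNilpotentLieAlgebra K G c ≃ₗ[K] graphNilpotentLieAlgebra K G c).toLinearMap
    (Submodule.span K (Set.range (graphVertex K G c))) =
  Submodule.span K (Set.range (graphVertex K G c))




section Infra
variable {K : Type*} [Field K] {L L' : Type*} [LieRing L] [LieAlgebra K L]
  [LieRing L'] [LieAlgebra K L']

/-- Quotient map as a `LieHom`. -/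
def lieMk (I : LieIdeal K L) : L →ₗ⁅K⁆ L ⧸ I :=
  { (I : Submodule K L).mkQ with map_lie' := fun {_ _} => rfl }

@[simp] lemma lieMk_apply (I : LieIdeal K L) (x : L) :
    lieMk I x = LieSubmodule.Quotient.mk' I x := rfl

lemma lieMk_surjective (I : LieIdeal K L) : Function.Surjective (lieMk I) :=
  Quot.mk_surjective

/-- Lift a Lie hom through an ideal quotient. -/
def lieQuotLift (I : LieIdeal K L) (θ : L →ₗ⁅K⁆ L') (h : ∀ x ∈ I, θ x = 0) :
    (L ⧸ I) →ₗ⁅K⁆ L' :=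
  { (I : Submodule K L).liftQ θ.toLinearMap (fun x hx => h x hx) with
    map_lie' := by rintro ⟨x⟩ ⟨y⟩; exact θ.map_lie x y }

@[simp] lemma lieQuotLift_mk (I : LieIdeal K L) (θ : L →ₗ⁅K⁆ L') (h) (x : L) :
    lieQuotLift I θ h (LieSubmodule.Quotient.mk' I x) = θ x := rfl

/-- A Lie algebra hom maps the lower central series into the lower central series. -/
lemma lcs_map_mem (θ : L →ₗ⁅K⁆ L') (k : ℕ) {x : L}
    (hx : x ∈ LieModule.lowerCentralSeries K L L k) :
    θ x ∈ LieModule.lowerCentralSeries K L' L' k :=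
  LieIdeal.map_lowerCentralSeries_le k (LieIdeal.mem_map hx)

end Infra

section Model
variable (K : Type*) [Field K] {S : Type*} (G : SimpleGraph S)
open Finsupp
open scoped Classical

noncomputable def qElt (a b : S) : S × S →₀ K :=
  if G.Adj a b then single (a, b) 1 - single (b, a) 1 else 0

lemma qElt_antisymm (a b : S) : qElt K G a b = - qElt K G b a := by
  unfold qElt
  by_cases h : G.Adj a b
  · rw [if_pos h, if_pos h.symm]; abel
  · rw [if_neg h, if_neg (fun h' => h h'.symm)]; simp

noncomputable def betaMap : (S →₀ K) →ₗ[K] (S →₀ K) →ₗ[K] (S × S →₀ K) :=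
  Finsupp.lsum K fun a => LinearMap.toSpanSingleton K _
    (Finsupp.lsum K fun b => LinearMap.toSpanSingleton K _ (qElt K G a b))


@[simp] lemma betaMap_single_single (a b : S) :
    betaMap K G (single a 1) (single b 1) = qElt K G a b := by
  simp [betaMap]

lemma betaMap_antisymm (u w : S →₀ K) : betaMap K G u w = - betaMap K G w u := by
  have h : betaMap K G + (betaMap K G).flip = 0 := by
    ext a b
    simp [qElt_antisymm K G a b]
  have := LinearMap.congr_fun (LinearMap.congr_fun h u) w
  simpa [eq_neg_iff_add_eq_zero] using this

lemma betaMap_self [CharZero K] (u : S →₀ K) : betaMap K G u u = 0 := by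
  have h := betaMap_antisymm K G u u
  have : (2 : K) • betaMap K G u u = 0 := by
    rw [two_smul]; exact add_eq_zero_iff_eq_neg.mpr h
  simpa [smul_eq_zero, (by norm_num : (2:K) ≠ 0)] using this


/-- The free 2-step model: V ⊕ W. -/
def GModel (K : Type*) [Field K] {S : Type*} (_G : SimpleGraph S) : Type _ :=
  (S →₀ K) × (S × S →₀ K)

noncomputable instance : AddCommGroup (GModel K G) :=
  inferInstanceAs (AddCommGroup ((S →₀ K) × (S × S →₀ K)))
noncomputable instance : Module K (GModel K G) :=
  inferInstanceAs (Module K ((S →₀ K) × (S × S →₀ K)))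

variable [CharZero K]

noncomputable instance : LieRing (GModel K G) where
  bracket x y := (0, betaMap K G x.1 y.1)
  add_lie x y z := by
    show (_, betaMap K G (x.1 + y.1) z.1) = ((0:S→₀K) + 0, _ + _)
    simp
  lie_add x y z := by
    show (_, betaMap K G x.1 (y.1 + z.1)) = ((0:S→₀K) + 0, _ + _)
    simp
  lie_self x := by
    show (_, betaMap K G x.1 x.1) = ((0 : S→₀K), (0 : S×S→₀K))
    simp [betaMap_self]
  leibniz_lie x y z := by
    show (_, betaMap K G x.1 (0:S→₀K)) =
      ((0:S→₀K) + 0, betaMap K G (0:S→₀K) z.1 + betaMap K G y.1 (0:S→₀K))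
    simp

noncomputable instance : LieAlgebra K (GModel K G) where
  lie_smul t x y := by
    show (_, betaMap K G x.1 (t • y.1)) = t • ((0:S→₀K), _)
    simp [Prod.smul_def]
    exact Prod.ext (smul_zero t).symm rfl

lemma GModel.bracket_def (x y : GModel K G) : ⁅x, y⁆ = (0, betaMap K G x.1 y.1) := rfl

lemma GModel.lcs_one_fst {x : GModel K G}
    (hx : x ∈ LieModule.lowerCentralSeries K (GModel K G) (GModel K G) 1) : x.1 = 0 := by
  have h : LieModule.lowerCentralSeries K (GModel K G) (GModel K G) 1 ≤
      ({ toSubmodule := LinearMap.ker (LinearMap.fst K (S →₀ K) (S×S→₀K)),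
         lie_mem := fun {z m} hm => by
           simp only [Submodule.mem_carrier, LinearMap.mem_ker] at hm ⊢
           rfl } : LieSubmodule K (GModel K G) (GModel K G)) := by
    rw [LieModule.lowerCentralSeries_succ]
    rw [LieSubmodule.lieIdeal_oper_eq_span, LieSubmodule.lieSpan_le]
    rintro z ⟨u, m, rfl⟩
    show (⁅(u:GModel K G), (m:GModel K G)⁆ : GModel K G).1 = 0
    rfl
  exact h hx

lemma GModel.lcs_two_eq_bot :
    LieModule.lowerCentralSeries K (GModel K G) (GModel K G) 2 = ⊥ := by
  rw [LieModule.lowerCentralSeries_succ, eq_bot_iff]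
  rw [LieSubmodule.lieIdeal_oper_eq_span, LieSubmodule.lieSpan_le]
  rintro z ⟨u, m, rfl⟩
  have h1 : (m : GModel K G).1 = 0 := GModel.lcs_one_fst K G m.2
  show ⁅(u:GModel K G), (m:GModel K G)⁆ ∈ _
  rw [GModel.bracket_def, h1]
  simp [LieSubmodule.mem_bot]
  exact rfl
end Model
section Graph
variable (K : Type) [Field K] [CharZero K] {S : Type} (G : SimpleGraph S)

open Finsupp

/-- The projection from the free Lie algebra to the graph Lie algebra. -/
noncomputable def gMk : FreeLieAlgebra K S →ₗ⁅K⁆ graphLieAlgebra K G :=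
  lieMk (graphIdeal K G)

lemma gMk_surjective : Function.Surjective (gMk K G) := lieMk_surjective _

lemma gMk_of (s : S) : gMk K G (FreeLieAlgebra.of K s) = graphVertexInf K G s := rfl

lemma graph_hom_ext {L : Type*} [LieRing L] [LieAlgebra K L]
    {f g : graphLieAlgebra K G →ₗ⁅K⁆ L}
    (h : ∀ s, f (graphVertexInf K G s) = g (graphVertexInf K G s)) : f = g := by
  have : f.comp (gMk K G) = g.comp (gMk K G) := FreeLieAlgebra.hom_ext fun s => h s
  ext x
  obtain ⟨y, rfl⟩ := gMk_surjective K G x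
  exact LieHom.congr_fun this y

/-- Universal property of the graph Lie algebra. -/
noncomputable def graphLift {L : Type*} [LieRing L] [LieAlgebra K L] (u : S → L)
    (hu : ∀ a b : S, ¬ G.Adj a b → ⁅u a, u b⁆ = 0) :
    graphLieAlgebra K G →ₗ⁅K⁆ L :=
  lieQuotLift (graphIdeal K G) (FreeLieAlgebra.lift K u) (by
    intro x hx
    have hle : graphIdeal K G ≤ (FreeLieAlgebra.lift K u).ker := by
      rw [graphIdeal, LieSubmodule.lieSpan_le]
      rintro y ⟨a, b, hab, rfl⟩
      have hz : (FreeLieAlgebra.lift K u) ⁅FreeLieAlgebra.of K a, FreeLieAlgebra.of K b⁆ = 0 := by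
        rw [LieHom.map_lie, FreeLieAlgebra.lift_of_apply, FreeLieAlgebra.lift_of_apply]
        exact hu a b hab
      exact SetLike.mem_coe.mpr (LieHom.mem_ker.mpr hz)
    exact LieHom.mem_ker.mp (hle hx))

@[simp] lemma graphLift_vertex {L : Type*} [LieRing L] [LieAlgebra K L] (u : S → L)
    (hu : ∀ a b : S, ¬ G.Adj a b → ⁅u a, u b⁆ = 0) (s : S) :
    graphLift K G u hu (graphVertexInf K G s) = u s :=
  FreeLieAlgebra.lift_of_apply u s

lemma vertex_bracket_eq_zero {a b : S} (h : ¬ G.Adj a b) :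
    ⁅graphVertexInf K G a, graphVertexInf K G b⁆ = 0 := by
  rw [← gMk_of, ← gMk_of, ← LieHom.map_lie]
  show LieSubmodule.Quotient.mk' (graphIdeal K G) _ = 0
  rw [LieSubmodule.Quotient.mk_eq_zero]
  exact LieSubmodule.subset_lieSpan ⟨a, b, h, rfl⟩

/-- The test homomorphism into the free 2-step model. -/
noncomputable def psiMap : graphLieAlgebra K G →ₗ⁅K⁆ GModel K G :=
  graphLift K G (fun s => ((single s 1, 0) : GModel K G)) (by
    intro a b hab
    show ((0, betaMap K G (single a 1) (single b 1)) : GModel K G) = 0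
    rw [betaMap_single_single, qElt, if_neg hab]
    rfl)

@[simp] lemma psiMap_vertex (s : S) :
    psiMap K G (graphVertexInf K G s) = ((single s 1, 0) : GModel K G) :=
  graphLift_vertex K G _ _ s

/-- Linear parametrization of the span of the vertices. -/
noncomputable def PhiV : (S →₀ K) →ₗ[K] graphLieAlgebra K G :=
  Finsupp.linearCombination K (graphVertexInf K G)

/-- Linear parametrization of the span of the brackets of vertices. -/
noncomputable def PhiB : (S × S →₀ K) →ₗ[K] graphLieAlgebra K G :=
  Finsupp.linearCombination K
    (fun p : S × S => ⁅graphVertexInf K G p.1, graphVertexInf K G p.2⁆)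

/-- Degree-2 part of the test homomorphism. -/
noncomputable def Theta : (S × S →₀ K) →ₗ[K] (S × S →₀ K) :=
  Finsupp.linearCombination K (fun p : S × S => qElt K G p.1 p.2)

lemma range_PhiV : LinearMap.range (PhiV K G) =
    Submodule.span K (Set.range (graphVertexInf K G)) := by
  rw [PhiV]; exact Finsupp.range_linearCombination K

lemma psi_PhiV (C : S →₀ K) : psiMap K G (PhiV K G C) = ((C, 0) : GModel K G) := by
  have : (psiMap K G).toLinearMap ∘ₗ PhiV K G =
      LinearMap.prod LinearMap.id (0 : (S →₀ K) →ₗ[K] (S × S →₀ K)) := by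
    ext s
    show psiMap K G (PhiV K G (single s 1)) = _
    rw [PhiV, Finsupp.linearCombination_single, one_smul, psiMap_vertex]
    rfl
  exact LinearMap.congr_fun this C

lemma psi_PhiB (C : S × S →₀ K) :
    psiMap K G (PhiB K G C) = ((0, Theta K G C) : GModel K G) := by
  have : (psiMap K G).toLinearMap ∘ₗ PhiB K G =
      LinearMap.prod (0 : (S × S →₀ K) →ₗ[K] (S →₀ K)) (Theta K G) := by
    ext p
    show psiMap K G (PhiB K G (single p 1)) = (0, Theta K G (single p 1))
    rw [PhiB, Theta, Finsupp.linearCombination_single, Finsupp.linearCombination_single,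
      one_smul, one_smul, LieHom.map_lie, psiMap_vertex, psiMap_vertex]
    show ((0, betaMap K G (single p.1 1) (single p.2 1)) : GModel K G) = _
    rw [betaMap_single_single]
  exact LinearMap.congr_fun this C

lemma Theta_apply_adj {a b : S} (hab : G.Adj a b) (C : S × S →₀ K) :
    Theta K G C (a, b) = C (a, b) - C (b, a) := by
  classical
  have : Finsupp.lapply ((a,b) : S × S) ∘ₗ Theta K G =
      (Finsupp.lapply ((a,b) : S × S) - Finsupp.lapply ((b,a) : S × S) :
        (S × S →₀ K) →ₗ[K] K) := by
    ext p
    show Theta K G (single p 1) (a, b) = (single p 1) (a,b) - (single p 1) (b,a)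
    rw [Theta, Finsupp.linearCombination_single, one_smul, qElt]
    by_cases h : G.Adj p.1 p.2
    · rw [if_pos h]
      simp only [Finsupp.sub_apply, Finsupp.single_apply]
      have e1 : ((p.1, p.2) = ((a : S), b)) = (p = (a, b)) := by
        simp [Prod.ext_iff]
      have e2 : ((p.2, p.1) = ((a : S), b)) = (p = (b, a)) := by
        simp only [Prod.ext_iff, eq_iff_iff]
        constructor <;> (rintro ⟨h1, h2⟩; exact ⟨h2, h1⟩)
      simp only [e1, e2]
    · rw [if_neg h]
      have h1 : p ≠ (a, b) := by rintro rfl; exact h hab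
      have h2 : p ≠ (b, a) := by rintro rfl; exact h hab.symm
      simp [Finsupp.single_apply, h1, h2]
  exact LinearMap.congr_fun this C
end Graph
section Graph2
variable (K : Type) [Field K] [CharZero K] {S : Type} (G : SimpleGraph S)
open Finsupp

local notation "gAlg" => graphLieAlgebra K G
local notation "vx" => graphVertexInf K G
local notation "spanV" => Submodule.span K (Set.range (graphVertexInf K G))
local notation "lcsg" k =>
  LieModule.lowerCentralSeries K (graphLieAlgebra K G) (graphLieAlgebra K G) k

lemma PhiB_swap (C : S × S →₀ K) :
    PhiB K G ((Finsupp.domLCongr (Equiv.prodComm S S) :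
      (S × S →₀ K) ≃ₗ[K] (S × S →₀ K)) C) = - PhiB K G C := by
  have : (PhiB K G) ∘ₗ (Finsupp.domLCongr (Equiv.prodComm S S) :
      (S × S →₀ K) ≃ₗ[K] (S × S →₀ K)).toLinearMap = - PhiB K G := by
    ext p
    show PhiB K G ((Finsupp.domLCongr (Equiv.prodComm S S) :
      (S × S →₀ K) ≃ₗ[K] (S × S →₀ K)) (single p 1)) = - PhiB K G (single p 1)
    rw [Finsupp.domLCongr_single, PhiB, Finsupp.linearCombination_single,
      Finsupp.linearCombination_single, one_smul, one_smul]
    exact (lie_skew _ _).symm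
  exact LinearMap.congr_fun this C

lemma PhiB_eq_zero_of_nonadj (C : S × S →₀ K)
    (h : ∀ p : S × S, G.Adj p.1 p.2 → C p = 0) : PhiB K G C = 0 := by
  rw [PhiB, Finsupp.linearCombination_apply, Finsupp.sum]
  apply Finset.sum_eq_zero
  intro p hp
  by_cases hadj : G.Adj p.1 p.2
  · rw [h p hadj, zero_smul]
  · rw [vertex_bracket_eq_zero K G hadj, smul_zero]

lemma PhiB_eq_zero_of_Theta_eq_zero {C : S × S →₀ K} (h : Theta K G C = 0) :
    PhiB K G C = 0 := by
  have hC : ∀ a b : S, G.Adj a b → C (a, b) = C (b, a) := by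
    intro a b hab
    have := Theta_apply_adj K G hab C
    rw [h] at this
    simpa [sub_eq_zero] using this.symm
  set D := (Finsupp.domLCongr (Equiv.prodComm S S) :
      (S × S →₀ K) ≃ₗ[K] (S × S →₀ K)) C with hD
  have hDval : ∀ p : S × S, D p = C (p.2, p.1) := by
    intro p
    rw [hD]
    show (Finsupp.equivMapDomain (Equiv.prodComm S S) C) p = _
    rw [Finsupp.equivMapDomain_apply]
    rfl
  have h1 : PhiB K G D = - PhiB K G C := PhiB_swap K G C
  have h2 : PhiB K G (D - C) = 0 := by
    apply PhiB_eq_zero_of_nonadj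
    intro p hadj
    rw [Finsupp.sub_apply, hDval]
    rw [hC p.1 p.2 hadj]
    simp
  have h3 : PhiB K G D - PhiB K G C = 0 := by rw [← map_sub]; exact h2
  rw [h1] at h3
  have : (2 : K) • PhiB K G C = 0 := by
    rw [two_smul]
    rw [show -PhiB K G C - PhiB K G C = -(PhiB K G C + PhiB K G C) by abel] at h3
    exact neg_eq_zero.mp h3
  simpa [smul_eq_zero, (by norm_num : (2:K) ≠ 0)] using this

lemma rangePhiB_inf_lcs2 {x : graphLieAlgebra K G}
    (hx : x ∈ LinearMap.range (PhiB K G))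
    (h2 : x ∈ LieModule.lowerCentralSeries K (graphLieAlgebra K G) (graphLieAlgebra K G) 2) :
    x = 0 := by
  obtain ⟨C, rfl⟩ := hx
  have hpsi : psiMap K G (PhiB K G C) ∈
      LieModule.lowerCentralSeries K (GModel K G) (GModel K G) 2 :=
    lcs_map_mem (psiMap K G) 2 h2
  rw [GModel.lcs_two_eq_bot, LieSubmodule.mem_bot] at hpsi
  rw [psi_PhiB] at hpsi
  have hTheta : Theta K G C = 0 := congrArg Prod.snd hpsi
  exact PhiB_eq_zero_of_Theta_eq_zero K G hTheta

lemma spanV_inf_lcs1 {x : graphLieAlgebra K G}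
    (hx : x ∈ Submodule.span K (Set.range (graphVertexInf K G)))
    (h1 : x ∈ LieModule.lowerCentralSeries K (graphLieAlgebra K G) (graphLieAlgebra K G) 1) :
    x = 0 := by
  rw [← range_PhiV] at hx
  obtain ⟨C, rfl⟩ := hx
  have hpsi : psiMap K G (PhiV K G C) ∈
      LieModule.lowerCentralSeries K (GModel K G) (GModel K G) 1 :=
    lcs_map_mem (psiMap K G) 1 h1
  have hfst := GModel.lcs_one_fst K G hpsi
  rw [psi_PhiV] at hfst
  have : C = 0 := hfst
  rw [this, map_zero]

lemma bracket_mem_rangePhiB {u w : graphLieAlgebra K G}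
    (hu : u ∈ Submodule.span K (Set.range (graphVertexInf K G)))
    (hw : w ∈ Submodule.span K (Set.range (graphVertexInf K G))) :
    ⁅u, w⁆ ∈ LinearMap.range (PhiB K G) := by
  induction hu using Submodule.span_induction with
  | mem x hxmem =>
    obtain ⟨s, rfl⟩ := hxmem
    induction hw using Submodule.span_induction with
    | mem y hymem =>
      obtain ⟨t, rfl⟩ := hymem
      exact ⟨single (s, t) 1, by
        rw [PhiB, Finsupp.linearCombination_single, one_smul]⟩
    | zero => rw [lie_zero]; exact Submodule.zero_mem _
    | add y z _ _ hy hz => rw [lie_add]; exact Submodule.add_mem _ hy hz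
    | smul t y _ hy => rw [lie_smul]; exact Submodule.smul_mem _ t hy
  | zero => rw [zero_lie]; exact Submodule.zero_mem _
  | add x y _ _ hx hy => rw [add_lie]; exact Submodule.add_mem _ hx hy
  | smul t x _ hx => rw [smul_lie]; exact Submodule.smul_mem _ t hx

lemma bracket_mem_lcs1 (x y : graphLieAlgebra K G) :
    ⁅x, y⁆ ∈ LieModule.lowerCentralSeries K (graphLieAlgebra K G) (graphLieAlgebra K G) 1 := by
  rw [LieModule.lowerCentralSeries_succ]
  exact LieSubmodule.lie_mem_lie (LieSubmodule.mem_top x)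
    (by rw [LieModule.lowerCentralSeries_zero]; exact LieSubmodule.mem_top y)

lemma spanV_sup_lcs1 :
    Submodule.span K (Set.range (graphVertexInf K G)) ⊔
      (LieModule.lowerCentralSeries K (graphLieAlgebra K G) (graphLieAlgebra K G) 1 :
        Submodule K (graphLieAlgebra K G)) = ⊤ := by
  set A : Submodule K (graphLieAlgebra K G) :=
    Submodule.span K (Set.range (graphVertexInf K G)) ⊔
      (LieModule.lowerCentralSeries K (graphLieAlgebra K G) (graphLieAlgebra K G) 1 :
        Submodule K (graphLieAlgebra K G)) with hA
  set A' : LieSubalgebra K (graphLieAlgebra K G) :=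
    { toSubmodule := A,
      lie_mem' := fun {x y} _ _ => by
        apply le_sup_right (α := Submodule K (graphLieAlgebra K G))
        exact bracket_mem_lcs1 K G x y } with hA'
  have hmem : ∀ s : S, graphVertexInf K G s ∈ A' := fun s =>
    le_sup_left (α := Submodule K (graphLieAlgebra K G))
      (Submodule.subset_span (Set.mem_range_self s))
  have hcomp : A'.incl.comp (FreeLieAlgebra.lift K
      (fun s => (⟨graphVertexInf K G s, hmem s⟩ : A'))) = gMk K G := by
    apply FreeLieAlgebra.hom_ext
    intro s
    rw [LieHom.comp_apply, FreeLieAlgebra.lift_of_apply]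
    rfl
  rw [eq_top_iff]
  intro x _
  obtain ⟨y, rfl⟩ := gMk_surjective K G x
  rw [← hcomp]
  exact ((FreeLieAlgebra.lift K (fun s => (⟨graphVertexInf K G s, hmem s⟩ : A'))) y).2

end Graph2
section Graph3
variable (K : Type) [Field K] [CharZero K] {S : Type} (G : SimpleGraph S) (c : ℕ)
open Finsupp

/-- Construct a Lie algebra endomorphism of `g_Γ` from prescribed degree-one images of
the vertices, provided the defining relations are respected modulo `γ₃`. -/
noncomputable def gradedHom (u : S → graphLieAlgebra K G)
    (h1 : ∀ s, u s ∈ Submodule.span K (Set.range (graphVertexInf K G)))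
    (h2 : ∀ a b : S, ¬ G.Adj a b →
      ⁅u a, u b⁆ ∈ LieModule.lowerCentralSeries K (graphLieAlgebra K G) (graphLieAlgebra K G) 2) :
    graphLieAlgebra K G →ₗ⁅K⁆ graphLieAlgebra K G :=
  graphLift K G u (fun a b hab =>
    rangePhiB_inf_lcs2 K G (bracket_mem_rangePhiB K G (h1 a) (h1 b)) (h2 a b hab))

@[simp] lemma gradedHom_vertex (u : S → graphLieAlgebra K G) (h1) (h2) (s : S) :
    gradedHom K G u h1 h2 (graphVertexInf K G s) = u s :=
  graphLift_vertex K G u _ s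

lemma hom_map_spanV_le (θ : graphLieAlgebra K G →ₗ⁅K⁆ graphLieAlgebra K G)
    (h : ∀ s, θ (graphVertexInf K G s) ∈ Submodule.span K (Set.range (graphVertexInf K G)))
    {x} (hx : x ∈ Submodule.span K (Set.range (graphVertexInf K G))) :
    θ x ∈ Submodule.span K (Set.range (graphVertexInf K G)) := by
  induction hx using Submodule.span_induction with
  | mem y hy => obtain ⟨s, rfl⟩ := hy; exact h s
  | zero => rw [map_zero]; exact Submodule.zero_mem _
  | add y z _ _ hy hz => rw [map_add]; exact Submodule.add_mem _ hy hz
  | smul t y _ hy => rw [map_smul]; exact Submodule.smul_mem _ t hy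

lemma hom_sub_mem_lcs1 (θ θ' : graphLieAlgebra K G →ₗ⁅K⁆ graphLieAlgebra K G)
    (h : ∀ s, θ (graphVertexInf K G s) - θ' (graphVertexInf K G s) ∈
      LieModule.lowerCentralSeries K (graphLieAlgebra K G) (graphLieAlgebra K G) 1)
    {x} (hx : x ∈ Submodule.span K (Set.range (graphVertexInf K G))) :
    θ x - θ' x ∈
      LieModule.lowerCentralSeries K (graphLieAlgebra K G) (graphLieAlgebra K G) 1 := by
  induction hx using Submodule.span_induction with
  | mem y hy => obtain ⟨s, rfl⟩ := hy; exact h s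
  | zero => simp only [map_zero, sub_zero]; exact zero_mem _
  | add y z _ _ hy hz =>
    have : θ (y + z) - θ' (y + z) = (θ y - θ' y) + (θ z - θ' z) := by
      rw [map_add, map_add]; abel
    rw [this]; exact add_mem hy hz
  | smul t y _ hy =>
    have : θ (t • y) - θ' (t • y) = t • (θ y - θ' y) := by
      rw [map_smul, map_smul, smul_sub]
    rw [this]; exact SMulMemClass.smul_mem t hy

/-- Build a Lie algebra equivalence from a pair of mutually inverse homs. -/
noncomputable def lieEquivOfHoms {L : Type*} [LieRing L] [LieAlgebra K L]
    (θ θ' : L →ₗ⁅K⁆ L) (h1 : ∀ x, θ (θ' x) = x) (h2 : ∀ x, θ' (θ x) = x) :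
    L ≃ₗ⁅K⁆ L :=
  { θ with invFun := θ', left_inv := h2, right_inv := h1 }

@[simp] lemma lieEquivOfHoms_apply {L : Type*} [LieRing L] [LieAlgebra K L]
    (θ θ' : L →ₗ⁅K⁆ L) (h1) (h2) (x : L) :
    lieEquivOfHoms K θ θ' h1 h2 x = θ x := rfl

@[simp] lemma lieEquivOfHoms_symm_apply {L : Type*} [LieRing L] [LieAlgebra K L]
    (θ θ' : L →ₗ⁅K⁆ L) (h1) (h2) (x : L) :
    (lieEquivOfHoms K θ θ' h1 h2).symm x = θ' x := rfl

/-- The projection from `g_Γ` to `n_{Γ,c}`. -/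
noncomputable def piN : graphLieAlgebra K G →ₗ⁅K⁆ graphNilpotentLieAlgebra K G c :=
  lieMk (LieModule.lowerCentralSeries K (graphLieAlgebra K G) (graphLieAlgebra K G) c)

lemma piN_surjective : Function.Surjective (piN K G c) := lieMk_surjective _

@[simp] lemma piN_vertex (s : S) : piN K G c (graphVertexInf K G s) = graphVertex K G c s :=
  rfl

lemma piN_eq_zero_iff (x : graphLieAlgebra K G) :
    piN K G c x = 0 ↔
      x ∈ LieModule.lowerCentralSeries K (graphLieAlgebra K G) (graphLieAlgebra K G) c :=
  LieSubmodule.Quotient.mk_eq_zero _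

lemma nilp_hom_ext {L : Type*} [LieRing L] [LieAlgebra K L]
    {f g : graphNilpotentLieAlgebra K G c →ₗ⁅K⁆ L}
    (h : ∀ s, f (graphVertex K G c s) = g (graphVertex K G c s)) : f = g := by
  have h2 : f.comp (piN K G c) = g.comp (piN K G c) := by
    apply graph_hom_ext
    intro s
    show f (piN K G c (graphVertexInf K G s)) = g (piN K G c (graphVertexInf K G s))
    exact h s
  ext x
  obtain ⟨y, rfl⟩ := piN_surjective K G c x
  exact LieHom.congr_fun h2 y

lemma mem_lcs_nilp_iff (k : ℕ) (x : graphNilpotentLieAlgebra K G c) :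
    x ∈ LieModule.lowerCentralSeries K (graphNilpotentLieAlgebra K G c)
        (graphNilpotentLieAlgebra K G c) k ↔
      ∃ y ∈ LieModule.lowerCentralSeries K (graphLieAlgebra K G) (graphLieAlgebra K G) k,
        piN K G c y = x := by
  rw [← LieIdeal.lowerCentralSeries_map_eq k (piN_surjective K G c)]
  rw [← LieSubmodule.mem_toSubmodule,
    LieIdeal.coe_map_of_surjective (piN_surjective K G c)]
  exact Submodule.mem_map

lemma spanVn_eq_map :
    Submodule.span K (Set.range (graphVertex K G c)) =
      Submodule.map (piN K G c : graphLieAlgebra K G →ₗ[K] graphNilpotentLieAlgebra K G c)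
        (Submodule.span K (Set.range (graphVertexInf K G))) := by
  rw [Submodule.map_span]
  congr 1
  rw [← Set.range_comp]
  rfl

end Graph3
section Graph4
variable (K : Type) [Field K] [CharZero K] {S : Type} (G : SimpleGraph S) (c : ℕ)
open Finsupp

lemma bracket_mem_lcs2' {L : Type*} [LieRing L] [LieAlgebra K L] {x y p q : L}
    (hx : x - p ∈ LieModule.lowerCentralSeries K L L 1)
    (hy : y - q ∈ LieModule.lowerCentralSeries K L L 1)
    (hxy : ⁅x, y⁆ = 0) : ⁅p, q⁆ ∈ LieModule.lowerCentralSeries K L L 2 := by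
  have h2 : ∀ {m z : L}, m ∈ LieModule.lowerCentralSeries K L L 1 →
      ⁅z, m⁆ ∈ LieModule.lowerCentralSeries K L L 2 := by
    intro m z hm
    rw [LieModule.lowerCentralSeries_succ]
    exact LieSubmodule.lie_mem_lie (LieSubmodule.mem_top z) hm
  have hid : ⁅p, q⁆ = ⁅x, y⁆ - ⁅x - p, y⁆ - ⁅p, y - q⁆ := by
    simp only [sub_lie, lie_sub]; abel
  rw [hid, hxy, zero_sub]
  have t1 : ⁅x - p, y⁆ ∈ LieModule.lowerCentralSeries K L L 2 := by
    rw [← lie_skew]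
    exact neg_mem (h2 hx)
  exact sub_mem (neg_mem t1) (h2 hy)

lemma hom_map_span_le' {L : Type*} [LieRing L] [LieAlgebra K L] {ι : Type*}
    (θ : L →ₗ⁅K⁆ L) (w : ι → L)
    (h : ∀ i, θ (w i) ∈ Submodule.span K (Set.range w)) {x}
    (hx : x ∈ Submodule.span K (Set.range w)) : θ x ∈ Submodule.span K (Set.range w) := by
  induction hx using Submodule.span_induction with
  | mem y hy => obtain ⟨i, rfl⟩ := hy; exact h i
  | zero => rw [map_zero]; exact Submodule.zero_mem _
  | add y z _ _ hy hz => rw [map_add]; exact Submodule.add_mem _ hy hz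
  | smul t y _ hy => rw [map_smul]; exact Submodule.smul_mem _ t hy

lemma hom_sub_mem' {L : Type*} [LieRing L] [LieAlgebra K L] {ι : Type*}
    (θ θ' : L →ₗ⁅K⁆ L) (P : LieSubmodule K L L) (w : ι → L)
    (h : ∀ i, θ (w i) - θ' (w i) ∈ P) {x}
    (hx : x ∈ Submodule.span K (Set.range w)) : θ x - θ' x ∈ P := by
  induction hx using Submodule.span_induction with
  | mem y hy => obtain ⟨i, rfl⟩ := hy; exact h i
  | zero => simp only [map_zero, sub_zero]; exact zero_mem _
  | add y z _ _ hy hz =>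
    have e : θ (y + z) - θ' (y + z) = (θ y - θ' y) + (θ z - θ' z) := by
      rw [map_add, map_add]; abel
    rw [e]; exact add_mem hy hz
  | smul t y _ hy =>
    have e : θ (t • y) - θ' (t • y) = t • (θ y - θ' y) := by
      rw [map_smul, map_smul, smul_sub]
    rw [e]; exact SMulMemClass.smul_mem t hy

lemma exists_decomp (x : graphLieAlgebra K G) :
    ∃ y, y ∈ Submodule.span K (Set.range (graphVertexInf K G)) ∧
      x - y ∈ LieModule.lowerCentralSeries K (graphLieAlgebra K G) (graphLieAlgebra K G) 1 := by
  have hx : x ∈ Submodule.span K (Set.range (graphVertexInf K G)) ⊔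
      (LieModule.lowerCentralSeries K (graphLieAlgebra K G) (graphLieAlgebra K G) 1 :
        Submodule K (graphLieAlgebra K G)) := by
    rw [spanV_sup_lcs1]; trivial
  obtain ⟨y, hy, z, hz, rfl⟩ := Submodule.mem_sup.mp hx
  refine ⟨y, hy, ?_⟩
  have : y + z - y = z := by abel
  rw [this]
  exact hz

/-- Part (3): every automorphism of `g_Γ` agrees with a graded one modulo `γ₂`. -/
lemma aut_to_graded_inf (F : graphLieAlgebra K G ≃ₗ⁅K⁆ graphLieAlgebra K G) :
    ∃ f : graphLieAlgebra K G ≃ₗ⁅K⁆ graphLieAlgebra K G, IsGradedAutInf K G f ∧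
      ∀ s : S, F (graphVertexInf K G s) - f (graphVertexInf K G s) ∈
        LieModule.lowerCentralSeries K (graphLieAlgebra K G) (graphLieAlgebra K G) 1 := by
  choose u hu1 hu2 using fun s => exists_decomp K G (F (graphVertexInf K G s))
  choose u' hu'1 hu'2 using fun s => exists_decomp K G (F.symm (graphVertexInf K G s))
  have hrel : ∀ (E : graphLieAlgebra K G ≃ₗ⁅K⁆ graphLieAlgebra K G) (w : S → graphLieAlgebra K G),
      (∀ s, E (graphVertexInf K G s) - w s ∈
        LieModule.lowerCentralSeries K (graphLieAlgebra K G) (graphLieAlgebra K G) 1) →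
      ∀ a b : S, ¬ G.Adj a b → ⁅w a, w b⁆ ∈
        LieModule.lowerCentralSeries K (graphLieAlgebra K G) (graphLieAlgebra K G) 2 := by
    intro E w hw2 a b hab
    apply bracket_mem_lcs2' K (hw2 a) (hw2 b)
    rw [← LieEquiv.map_lie, vertex_bracket_eq_zero K G hab]
    exact E.toLieHom.map_zero
  set θ : graphLieAlgebra K G →ₗ⁅K⁆ graphLieAlgebra K G :=
    gradedHom K G u hu1 (hrel F u hu2) with hθ
  set θ' : graphLieAlgebra K G →ₗ⁅K⁆ graphLieAlgebra K G :=
    gradedHom K G u' hu'1 (hrel F.symm u' hu'2) with hθ'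
  -- composite fixes the vertices
  have main : ∀ (E : graphLieAlgebra K G ≃ₗ⁅K⁆ graphLieAlgebra K G)
      (w w' : S → graphLieAlgebra K G)
      (hw1 : ∀ s, w s ∈ Submodule.span K (Set.range (graphVertexInf K G)))
      (hw'1 : ∀ s, w' s ∈ Submodule.span K (Set.range (graphVertexInf K G)))
      (hw2 : ∀ s, E (graphVertexInf K G s) - w s ∈
        LieModule.lowerCentralSeries K (graphLieAlgebra K G) (graphLieAlgebra K G) 1)
      (hw'2 : ∀ s, E.symm (graphVertexInf K G s) - w' s ∈
        LieModule.lowerCentralSeries K (graphLieAlgebra K G) (graphLieAlgebra K G) 1)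
      (ρ ρ' : graphLieAlgebra K G →ₗ⁅K⁆ graphLieAlgebra K G)
      (hρ : ∀ s, ρ (graphVertexInf K G s) = w s)
      (hρ' : ∀ s, ρ' (graphVertexInf K G s) = w' s),
      ∀ s, ρ (ρ' (graphVertexInf K G s)) = graphVertexInf K G s := by
    intro E w w' hw1 hw'1 hw2 hw'2 ρ ρ' hρ hρ' s
    have hx : ρ (w' s) ∈ Submodule.span K (Set.range (graphVertexInf K G)) :=
      hom_map_span_le' K ρ _ (fun t => by rw [hρ t]; exact hw1 t) (hw'1 s)
    have hd1 : ρ (w' s) - E (w' s) ∈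
        LieModule.lowerCentralSeries K (graphLieAlgebra K G) (graphLieAlgebra K G) 1 := by
      apply hom_sub_mem' K ρ E.toLieHom _ (graphVertexInf K G)
        (fun t => by
          rw [hρ t]
          have := hw2 t
          have e : w t - E (graphVertexInf K G t) =
              -(E (graphVertexInf K G t) - w t) := by abel
          show w t - E (graphVertexInf K G t) ∈ _
          rw [e]
          exact neg_mem this)
        (hw'1 s)
    have hd2 : E (w' s) - graphVertexInf K G s ∈
        LieModule.lowerCentralSeries K (graphLieAlgebra K G) (graphLieAlgebra K G) 1 := by
      have e : E (w' s) - graphVertexInf K G s =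
          - E (E.symm (graphVertexInf K G s) - w' s) := by
        show E (w' s) - graphVertexInf K G s = - (E.toLieHom (E.symm (graphVertexInf K G s) - w' s))
        rw [map_sub]
        show _ = -(E (E.symm (graphVertexInf K G s)) - E (w' s))
        rw [LieEquiv.apply_symm_apply]
        abel
      rw [e]
      exact neg_mem (lcs_map_mem E.toLieHom 1 (hw'2 s))
    have hdiff : ρ (w' s) - graphVertexInf K G s ∈
        LieModule.lowerCentralSeries K (graphLieAlgebra K G) (graphLieAlgebra K G) 1 := by
      have e : ρ (w' s) - graphVertexInf K G s =
          (ρ (w' s) - E (w' s)) + (E (w' s) - graphVertexInf K G s) := by abel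
      rw [e]; exact add_mem hd1 hd2
    have hspan : ρ (w' s) - graphVertexInf K G s ∈
        Submodule.span K (Set.range (graphVertexInf K G)) :=
      Submodule.sub_mem _ hx (Submodule.subset_span (Set.mem_range_self s))
    have hzero := spanV_inf_lcs1 K G hspan hdiff
    have : ρ (w' s) = graphVertexInf K G s := by
      have := sub_eq_zero.mp hzero; exact this
    rw [hρ' s, this]
  have hcomp1 : ∀ s, θ (θ' (graphVertexInf K G s)) = graphVertexInf K G s :=
    main F u u' hu1 hu'1 hu2 hu'2 θ θ' (fun s => gradedHom_vertex K G u _ _ s)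
      (fun s => gradedHom_vertex K G u' _ _ s)
  have hcomp2 : ∀ s, θ' (θ (graphVertexInf K G s)) = graphVertexInf K G s := by
    apply main F.symm u' u hu'1 hu1 hu'2 (fun s => by
        rw [LieEquiv.symm_symm]; exact hu2 s)
      θ' θ (fun s => gradedHom_vertex K G u' _ _ s) (fun s => gradedHom_vertex K G u _ _ s)
  have hid1 : θ.comp θ' = LieHom.id := by
    apply graph_hom_ext
    intro s
    show θ (θ' (graphVertexInf K G s)) = graphVertexInf K G s
    exact hcomp1 s
  have hid2 : θ'.comp θ = LieHom.id := by
    apply graph_hom_ext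
    intro s
    show θ' (θ (graphVertexInf K G s)) = graphVertexInf K G s
    exact hcomp2 s
  refine ⟨lieEquivOfHoms K θ θ' (fun x => LieHom.congr_fun hid1 x)
    (fun x => LieHom.congr_fun hid2 x), ?_, ?_⟩
  · -- gradedness
    apply le_antisymm
    · rintro _ ⟨x, hx, rfl⟩
      exact hom_map_span_le' K θ _ (fun t => by
        rw [gradedHom_vertex]; exact hu1 t) hx
    · intro x hx
      refine ⟨θ' x, hom_map_span_le' K θ' _ (fun t => by
        rw [gradedHom_vertex]; exact hu'1 t) hx, ?_⟩
      exact LieHom.congr_fun hid1 x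
  · intro s
    show F (graphVertexInf K G s) - θ (graphVertexInf K G s) ∈ _
    rw [hθ, gradedHom_vertex]
    exact hu2 s

end Graph4
section Graph5
variable (K : Type) [Field K] [CharZero K] {S : Type} (G : SimpleGraph S) (c : ℕ)
open Finsupp

/-- Descend an endomorphism of `g_Γ` to `n_{Γ,c}`. -/
noncomputable def descendHom (θ : graphLieAlgebra K G →ₗ⁅K⁆ graphLieAlgebra K G) :
    graphNilpotentLieAlgebra K G c →ₗ⁅K⁆ graphNilpotentLieAlgebra K G c :=
  lieQuotLift _ ((piN K G c).comp θ) (fun x hx => by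
    rw [LieHom.comp_apply, piN_eq_zero_iff]
    exact lcs_map_mem θ c hx)

@[simp] lemma descendHom_piN (θ : graphLieAlgebra K G →ₗ⁅K⁆ graphLieAlgebra K G)
    (x : graphLieAlgebra K G) :
    descendHom K G c θ (piN K G c x) = piN K G c (θ x) := rfl

lemma vn_mem_spanVn (s : S) :
    graphVertex K G c s ∈ Submodule.span K (Set.range (graphVertex K G c)) :=
  Submodule.subset_span (Set.mem_range_self s)

lemma spanVn_inf_lcs1 (hc1 : 1 ≤ c) {x : graphNilpotentLieAlgebra K G c}
    (hx : x ∈ Submodule.span K (Set.range (graphVertex K G c)))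
    (h : x ∈ LieModule.lowerCentralSeries K (graphNilpotentLieAlgebra K G c)
      (graphNilpotentLieAlgebra K G c) 1) : x = 0 := by
  rw [spanVn_eq_map] at hx
  obtain ⟨w, hw, rfl⟩ := hx
  obtain ⟨z, hz, hπz⟩ := (mem_lcs_nilp_iff K G c 1 _).mp h
  have hπz' : piN K G c z = piN K G c w := hπz
  have hwz : w - z ∈
      LieModule.lowerCentralSeries K (graphLieAlgebra K G) (graphLieAlgebra K G) c := by
    rw [← piN_eq_zero_iff, map_sub, hπz', sub_self]
  have hw1 : w ∈
      LieModule.lowerCentralSeries K (graphLieAlgebra K G) (graphLieAlgebra K G) 1 := by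
    have : w = z + (w - z) := by abel
    rw [this]
    exact add_mem hz (LieModule.antitone_lowerCentralSeries K _ _ hc1 hwz)
  have : w = 0 := spanV_inf_lcs1 K G hw hw1
  rw [this]
  exact map_zero _

lemma exists_decomp_n (x : graphNilpotentLieAlgebra K G c) :
    ∃ w, w ∈ Submodule.span K (Set.range (graphVertexInf K G)) ∧
      x - piN K G c w ∈ LieModule.lowerCentralSeries K (graphNilpotentLieAlgebra K G c)
        (graphNilpotentLieAlgebra K G c) 1 := by
  obtain ⟨y, rfl⟩ := piN_surjective K G c x
  obtain ⟨w, hw, hz⟩ := exists_decomp K G y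
  refine ⟨w, hw, ?_⟩
  rw [← map_sub]
  exact lcs_map_mem (piN K G c) 1 hz

lemma vn_bracket_eq_zero {a b : S} (h : ¬ G.Adj a b) :
    ⁅graphVertex K G c a, graphVertex K G c b⁆ = 0 := by
  have : ⁅graphVertex K G c a, graphVertex K G c b⁆ =
      piN K G c ⁅graphVertexInf K G a, graphVertexInf K G b⁆ := by
    rw [LieHom.map_lie]; rfl
  rw [this, vertex_bracket_eq_zero K G h]
  exact map_zero _

/-- Part (5): a graded automorphism of `g_Γ` descends to a graded automorphism
of `n_{Γ,c}`. -/
lemma graded_inf_to_nil (f : graphLieAlgebra K G ≃ₗ⁅K⁆ graphLieAlgebra K G)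
    (hf : IsGradedAutInf K G f) :
    ∃ f' : graphNilpotentLieAlgebra K G c ≃ₗ⁅K⁆ graphNilpotentLieAlgebra K G c,
      IsGradedAutNil K G c f' ∧
      ∀ s : S, f' (graphVertex K G c s) = piN K G c (f (graphVertexInf K G s)) := by
  set θ := descendHom K G c f.toLieHom with hθ
  set θ' := descendHom K G c f.symm.toLieHom with hθ'
  have hid1 : θ.comp θ' = LieHom.id := by
    apply nilp_hom_ext
    intro s
    show θ (θ' (piN K G c (graphVertexInf K G s))) = _
    rw [descendHom_piN, descendHom_piN]
    show piN K G c (f (f.symm (graphVertexInf K G s))) = _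
    rw [LieEquiv.apply_symm_apply]
    rfl
  have hid2 : θ'.comp θ = LieHom.id := by
    apply nilp_hom_ext
    intro s
    show θ' (θ (piN K G c (graphVertexInf K G s))) = _
    rw [descendHom_piN, descendHom_piN]
    show piN K G c (f.symm (f (graphVertexInf K G s))) = _
    rw [LieEquiv.symm_apply_apply]
    rfl
  have hfv : ∀ t : S, f (graphVertexInf K G t) ∈
      Submodule.span K (Set.range (graphVertexInf K G)) := by
    intro t
    rw [← hf]
    exact Submodule.mem_map_of_mem (Submodule.subset_span (Set.mem_range_self t))
  have hθv : ∀ t : S, θ (graphVertex K G c t) ∈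
      Submodule.span K (Set.range (graphVertex K G c)) := by
    intro t
    show θ (piN K G c (graphVertexInf K G t)) ∈ _
    rw [descendHom_piN, spanVn_eq_map]
    exact Submodule.mem_map_of_mem (hfv t)
  have hf'v : ∀ t : S, f.symm (graphVertexInf K G t) ∈
      Submodule.span K (Set.range (graphVertexInf K G)) := by
    intro t
    have : graphVertexInf K G t ∈ Submodule.map
        (f : graphLieAlgebra K G ≃ₗ[K] graphLieAlgebra K G).toLinearMap
        (Submodule.span K (Set.range (graphVertexInf K G))) := by
      rw [hf]; exact Submodule.subset_span (Set.mem_range_self t)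
    obtain ⟨y, hy, hxy⟩ := this
    have : f.symm (graphVertexInf K G t) = y := by
      rw [← hxy]
      exact f.symm_apply_apply y
    rw [this]; exact hy
  have hθ'v : ∀ t : S, θ' (graphVertex K G c t) ∈
      Submodule.span K (Set.range (graphVertex K G c)) := by
    intro t
    show θ' (piN K G c (graphVertexInf K G t)) ∈ _
    rw [descendHom_piN, spanVn_eq_map]
    exact Submodule.mem_map_of_mem (hf'v t)
  refine ⟨lieEquivOfHoms K θ θ' (fun x => LieHom.congr_fun hid1 x)
    (fun x => LieHom.congr_fun hid2 x), ?_, ?_⟩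
  · apply le_antisymm
    · rintro _ ⟨x, hx, rfl⟩
      exact hom_map_span_le' K θ _ hθv hx
    · intro x hx
      exact ⟨θ' x, hom_map_span_le' K θ' _ hθ'v hx, LieHom.congr_fun hid1 x⟩
  · intro s
    rfl

end Graph5
section Graph6
variable (K : Type) [Field K] [CharZero K] {S : Type} (G : SimpleGraph S) (c : ℕ)
open Finsupp

/-- Part (6): a graded automorphism of `n_{Γ,c}` lifts to a graded automorphism
of `g_Γ`. -/
lemma graded_nil_to_inf (hc : 1 < c)
    (f' : graphNilpotentLieAlgebra K G c ≃ₗ⁅K⁆ graphNilpotentLieAlgebra K G c)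
    (hf' : IsGradedAutNil K G c f') :
    ∃ f : graphLieAlgebra K G ≃ₗ⁅K⁆ graphLieAlgebra K G, IsGradedAutInf K G f ∧
      ∀ s : S, f' (graphVertex K G c s) = piN K G c (f (graphVertexInf K G s)) := by
  have hsV : ∀ s : S, f' (graphVertex K G c s) ∈
      Submodule.span K (Set.range (graphVertex K G c)) := by
    intro s
    rw [← hf']
    exact Submodule.mem_map_of_mem (vn_mem_spanVn K G c s)
  have hsV' : ∀ s : S, f'.symm (graphVertex K G c s) ∈
      Submodule.span K (Set.range (graphVertex K G c)) := by
    intro s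
    have h1 : graphVertex K G c s ∈ Submodule.map
        (f' : graphNilpotentLieAlgebra K G c ≃ₗ[K] graphNilpotentLieAlgebra K G c).toLinearMap
        (Submodule.span K (Set.range (graphVertex K G c))) := by
      rw [hf']; exact vn_mem_spanVn K G c s
    obtain ⟨y, hy, hxy⟩ := h1
    have : f'.symm (graphVertex K G c s) = y := by
      rw [← hxy]; exact f'.symm_apply_apply y
    rw [this]; exact hy
  have hpick : ∀ x : graphNilpotentLieAlgebra K G c,
      x ∈ Submodule.span K (Set.range (graphVertex K G c)) →
      ∃ y, y ∈ Submodule.span K (Set.range (graphVertexInf K G)) ∧ piN K G c y = x := by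
    intro x hx
    rw [spanVn_eq_map] at hx
    obtain ⟨y, hy, hπ⟩ := hx
    exact ⟨y, hy, hπ⟩
  choose u hu1 hπu using fun s => hpick _ (hsV s)
  choose u' hu'1 hπu' using fun s => hpick _ (hsV' s)
  have hrel : ∀ (E : graphNilpotentLieAlgebra K G c ≃ₗ⁅K⁆ graphNilpotentLieAlgebra K G c)
      (w : S → graphLieAlgebra K G)
      (hπw : ∀ s, piN K G c (w s) = E (graphVertex K G c s)),
      ∀ a b : S, ¬ G.Adj a b → ⁅w a, w b⁆ ∈
        LieModule.lowerCentralSeries K (graphLieAlgebra K G) (graphLieAlgebra K G) 2 := by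
    intro E w hπw a b hab
    have hπbr : piN K G c ⁅w a, w b⁆ = 0 := by
      rw [LieHom.map_lie, hπw a, hπw b, ← LieEquiv.map_lie,
        vn_bracket_eq_zero K G c hab]
      exact E.toLieHom.map_zero
    have hmem := (piN_eq_zero_iff K G c _).mp hπbr
    exact LieModule.antitone_lowerCentralSeries K _ _ (by omega : 2 ≤ c) hmem
  set θ : graphLieAlgebra K G →ₗ⁅K⁆ graphLieAlgebra K G :=
    gradedHom K G u hu1 (hrel f' u hπu) with hθdef
  set θ' : graphLieAlgebra K G →ₗ⁅K⁆ graphLieAlgebra K G :=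
    gradedHom K G u' hu'1 (hrel f'.symm u' hπu') with hθ'def
  have hπθ : ∀ (E : graphNilpotentLieAlgebra K G c ≃ₗ⁅K⁆ graphNilpotentLieAlgebra K G c)
      (w : S → graphLieAlgebra K G)
      (hπw : ∀ s, piN K G c (w s) = E (graphVertex K G c s))
      (ρ : graphLieAlgebra K G →ₗ⁅K⁆ graphLieAlgebra K G)
      (hρ : ∀ s, ρ (graphVertexInf K G s) = w s),
      (piN K G c).comp ρ = E.toLieHom.comp (piN K G c) := by
    intro E w hπw ρ hρ
    apply graph_hom_ext
    intro s
    show piN K G c (ρ (graphVertexInf K G s)) = E (piN K G c (graphVertexInf K G s))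
    rw [hρ s, hπw s]
    rfl
  have main : ∀ (E : graphNilpotentLieAlgebra K G c ≃ₗ⁅K⁆ graphNilpotentLieAlgebra K G c)
      (w w' : S → graphLieAlgebra K G)
      (hw1 : ∀ s, w s ∈ Submodule.span K (Set.range (graphVertexInf K G)))
      (hw'1 : ∀ s, w' s ∈ Submodule.span K (Set.range (graphVertexInf K G)))
      (hπw : ∀ s, piN K G c (w s) = E (graphVertex K G c s))
      (hπw' : ∀ s, piN K G c (w' s) = E.symm (graphVertex K G c s))
      (ρ ρ' : graphLieAlgebra K G →ₗ⁅K⁆ graphLieAlgebra K G)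
      (hρ : ∀ s, ρ (graphVertexInf K G s) = w s)
      (hρ' : ∀ s, ρ' (graphVertexInf K G s) = w' s),
      ∀ s, ρ (ρ' (graphVertexInf K G s)) = graphVertexInf K G s := by
    intro E w w' hw1 hw'1 hπw hπw' ρ ρ' hρ hρ' s
    have hx : ρ (w' s) ∈ Submodule.span K (Set.range (graphVertexInf K G)) :=
      hom_map_span_le' K ρ _ (fun t => by rw [hρ t]; exact hw1 t) (hw'1 s)
    have hπx : piN K G c (ρ (w' s)) = graphVertex K G c s := by
      have := LieHom.congr_fun (hπθ E w hπw ρ hρ) (w' s)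
      rw [LieHom.comp_apply, LieHom.comp_apply] at this
      rw [this]
      show E (piN K G c (w' s)) = _
      rw [hπw' s]
      exact E.apply_symm_apply _
    have hdiff : ρ (w' s) - graphVertexInf K G s ∈
        LieModule.lowerCentralSeries K (graphLieAlgebra K G) (graphLieAlgebra K G) 1 := by
      have h0 : piN K G c (ρ (w' s) - graphVertexInf K G s) = 0 := by
        rw [map_sub, hπx]
        show graphVertex K G c s - graphVertex K G c s = 0
        rw [sub_self]
      have := (piN_eq_zero_iff K G c _).mp h0
      exact LieModule.antitone_lowerCentralSeries K _ _ (by omega : 1 ≤ c) this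
    have hspan : ρ (w' s) - graphVertexInf K G s ∈
        Submodule.span K (Set.range (graphVertexInf K G)) :=
      Submodule.sub_mem _ hx (Submodule.subset_span (Set.mem_range_self s))
    have hzero := spanV_inf_lcs1 K G hspan hdiff
    rw [hρ' s]
    exact sub_eq_zero.mp hzero
  have hcomp1 : ∀ s, θ (θ' (graphVertexInf K G s)) = graphVertexInf K G s :=
    main f' u u' hu1 hu'1 hπu hπu' θ θ' (fun s => gradedHom_vertex K G u _ _ s)
      (fun s => gradedHom_vertex K G u' _ _ s)
  have hcomp2 : ∀ s, θ' (θ (graphVertexInf K G s)) = graphVertexInf K G s :=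
    main f'.symm u' u hu'1 hu1 hπu'
      (fun s => by rw [LieEquiv.symm_symm]; exact hπu s)
      θ' θ (fun s => gradedHom_vertex K G u' _ _ s) (fun s => gradedHom_vertex K G u _ _ s)
  have hid1 : θ.comp θ' = LieHom.id := by
    apply graph_hom_ext
    intro s
    exact hcomp1 s
  have hid2 : θ'.comp θ = LieHom.id := by
    apply graph_hom_ext
    intro s
    exact hcomp2 s
  refine ⟨lieEquivOfHoms K θ θ' (fun x => LieHom.congr_fun hid1 x)
    (fun x => LieHom.congr_fun hid2 x), ?_, ?_⟩
  · apply le_antisymm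
    · rintro _ ⟨x, hx, rfl⟩
      exact hom_map_span_le' K θ _ (fun t => by
        rw [gradedHom_vertex]; exact hu1 t) hx
    · intro x hx
      refine ⟨θ' x, hom_map_span_le' K θ' _ (fun t => by
        rw [gradedHom_vertex]; exact hu'1 t) hx, LieHom.congr_fun hid1 x⟩
  · intro s
    show f' (graphVertex K G c s) = piN K G c (θ (graphVertexInf K G s))
    rw [hθdef, gradedHom_vertex, hπu s]

end Graph6
section Graph7
variable (K : Type) [Field K] [CharZero K] {S : Type} (G : SimpleGraph S) (c : ℕ)
open Finsupp

/-- Part (4): every automorphism of `n_{Γ,c}` agrees with a graded one modulo `γ₂`. -/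
lemma aut_to_graded_nil (hc : 1 < c)
    (F : graphNilpotentLieAlgebra K G c ≃ₗ⁅K⁆ graphNilpotentLieAlgebra K G c) :
    ∃ f : graphNilpotentLieAlgebra K G c ≃ₗ⁅K⁆ graphNilpotentLieAlgebra K G c,
      IsGradedAutNil K G c f ∧
      ∀ s : S, F (graphVertex K G c s) - f (graphVertex K G c s) ∈
        LieModule.lowerCentralSeries K (graphNilpotentLieAlgebra K G c)
          (graphNilpotentLieAlgebra K G c) 1 := by
  choose u hu1 hu2 using fun s => exists_decomp_n K G c (F (graphVertex K G c s))
  choose u' hu'1 hu'2 using fun s => exists_decomp_n K G c (F.symm (graphVertex K G c s))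
  have hrel : ∀ (E : graphNilpotentLieAlgebra K G c ≃ₗ⁅K⁆ graphNilpotentLieAlgebra K G c)
      (w : S → graphLieAlgebra K G)
      (hw2 : ∀ s, E (graphVertex K G c s) - piN K G c (w s) ∈
        LieModule.lowerCentralSeries K (graphNilpotentLieAlgebra K G c)
          (graphNilpotentLieAlgebra K G c) 1),
      ∀ a b : S, ¬ G.Adj a b → ⁅w a, w b⁆ ∈
        LieModule.lowerCentralSeries K (graphLieAlgebra K G) (graphLieAlgebra K G) 2 := by
    intro E w hw2 a b hab
    have h2n : ⁅piN K G c (w a), piN K G c (w b)⁆ ∈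
        LieModule.lowerCentralSeries K (graphNilpotentLieAlgebra K G c)
          (graphNilpotentLieAlgebra K G c) 2 := by
      apply bracket_mem_lcs2' K (hw2 a) (hw2 b)
      rw [← LieEquiv.map_lie, vn_bracket_eq_zero K G c hab]
      exact E.toLieHom.map_zero
    have hπbr : piN K G c ⁅w a, w b⁆ ∈
        LieModule.lowerCentralSeries K (graphNilpotentLieAlgebra K G c)
          (graphNilpotentLieAlgebra K G c) 2 := by
      rw [LieHom.map_lie]; exact h2n
    obtain ⟨y, hy, hπy⟩ := (mem_lcs_nilp_iff K G c 2 _).mp hπbr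
    have hd : ⁅w a, w b⁆ - y ∈
        LieModule.lowerCentralSeries K (graphLieAlgebra K G) (graphLieAlgebra K G) c := by
      rw [← piN_eq_zero_iff, map_sub, hπy, sub_self]
    have : ⁅w a, w b⁆ = y + (⁅w a, w b⁆ - y) := by abel
    rw [this]
    exact add_mem hy (LieModule.antitone_lowerCentralSeries K _ _ (by omega : 2 ≤ c) hd)
  set θ : graphNilpotentLieAlgebra K G c →ₗ⁅K⁆ graphNilpotentLieAlgebra K G c :=
    descendHom K G c (gradedHom K G u hu1 (hrel F u hu2)) with hθdef
  set θ' : graphNilpotentLieAlgebra K G c →ₗ⁅K⁆ graphNilpotentLieAlgebra K G c :=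
    descendHom K G c (gradedHom K G u' hu'1 (hrel F.symm u' hu'2)) with hθ'def
  have hθv : ∀ s, θ (graphVertex K G c s) = piN K G c (u s) := by
    intro s
    show θ (piN K G c (graphVertexInf K G s)) = _
    rw [hθdef, descendHom_piN, gradedHom_vertex]
  have hθ'v : ∀ s, θ' (graphVertex K G c s) = piN K G c (u' s) := by
    intro s
    show θ' (piN K G c (graphVertexInf K G s)) = _
    rw [hθ'def, descendHom_piN, gradedHom_vertex]
  have hspanv : ∀ s, θ (graphVertex K G c s) ∈
      Submodule.span K (Set.range (graphVertex K G c)) := by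
    intro s
    rw [hθv s, spanVn_eq_map]
    exact Submodule.mem_map_of_mem (hu1 s)
  have hspanv' : ∀ s, θ' (graphVertex K G c s) ∈
      Submodule.span K (Set.range (graphVertex K G c)) := by
    intro s
    rw [hθ'v s, spanVn_eq_map]
    exact Submodule.mem_map_of_mem (hu'1 s)
  have main : ∀ (E : graphNilpotentLieAlgebra K G c ≃ₗ⁅K⁆ graphNilpotentLieAlgebra K G c)
      (w w' : S → graphLieAlgebra K G)
      (hw1 : ∀ s, w s ∈ Submodule.span K (Set.range (graphVertexInf K G)))
      (hw'1 : ∀ s, w' s ∈ Submodule.span K (Set.range (graphVertexInf K G)))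
      (hw2 : ∀ s, E (graphVertex K G c s) - piN K G c (w s) ∈
        LieModule.lowerCentralSeries K (graphNilpotentLieAlgebra K G c)
          (graphNilpotentLieAlgebra K G c) 1)
      (hw'2 : ∀ s, E.symm (graphVertex K G c s) - piN K G c (w' s) ∈
        LieModule.lowerCentralSeries K (graphNilpotentLieAlgebra K G c)
          (graphNilpotentLieAlgebra K G c) 1)
      (ρ ρ' : graphNilpotentLieAlgebra K G c →ₗ⁅K⁆ graphNilpotentLieAlgebra K G c)
      (hρ : ∀ s, ρ (graphVertex K G c s) = piN K G c (w s))
      (hρv : ∀ s, ρ (graphVertex K G c s) ∈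
        Submodule.span K (Set.range (graphVertex K G c)))
      (hρ' : ∀ s, ρ' (graphVertex K G c s) = piN K G c (w' s))
      (hρ'v : ∀ s, ρ' (graphVertex K G c s) ∈
        Submodule.span K (Set.range (graphVertex K G c))),
      ∀ s, ρ (ρ' (graphVertex K G c s)) = graphVertex K G c s := by
    intro E w w' hw1 hw'1 hw2 hw'2 ρ ρ' hρ hρv hρ' hρ'v s
    have hx'span : piN K G c (w' s) ∈
        Submodule.span K (Set.range (graphVertex K G c)) := by
      rw [spanVn_eq_map]; exact Submodule.mem_map_of_mem (hw'1 s)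
    have hx : ρ (piN K G c (w' s)) ∈
        Submodule.span K (Set.range (graphVertex K G c)) :=
      hom_map_span_le' K ρ _ hρv hx'span
    have hd1 : ρ (piN K G c (w' s)) - E (piN K G c (w' s)) ∈
        LieModule.lowerCentralSeries K (graphNilpotentLieAlgebra K G c)
          (graphNilpotentLieAlgebra K G c) 1 := by
      apply hom_sub_mem' K ρ E.toLieHom _ (graphVertex K G c)
        (fun t => by
          rw [hρ t]
          have e : piN K G c (w t) - E (graphVertex K G c t) =
              -(E (graphVertex K G c t) - piN K G c (w t)) := by abel
          show piN K G c (w t) - E (graphVertex K G c t) ∈ _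
          rw [e]
          exact neg_mem (hw2 t))
        hx'span
    have hd2 : E (piN K G c (w' s)) - graphVertex K G c s ∈
        LieModule.lowerCentralSeries K (graphNilpotentLieAlgebra K G c)
          (graphNilpotentLieAlgebra K G c) 1 := by
      have e : E (piN K G c (w' s)) - graphVertex K G c s =
          - (E.toLieHom (E.symm (graphVertex K G c s) - piN K G c (w' s))) := by
        rw [map_sub]
        show _ = -(E (E.symm (graphVertex K G c s)) - E (piN K G c (w' s)))
        rw [E.apply_symm_apply]
        abel
      rw [e]
      exact neg_mem (lcs_map_mem E.toLieHom 1 (hw'2 s))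
    have hdiff : ρ (piN K G c (w' s)) - graphVertex K G c s ∈
        LieModule.lowerCentralSeries K (graphNilpotentLieAlgebra K G c)
          (graphNilpotentLieAlgebra K G c) 1 := by
      have e : ρ (piN K G c (w' s)) - graphVertex K G c s =
          (ρ (piN K G c (w' s)) - E (piN K G c (w' s))) +
            (E (piN K G c (w' s)) - graphVertex K G c s) := by abel
      rw [e]; exact add_mem hd1 hd2
    have hspan2 : ρ (piN K G c (w' s)) - graphVertex K G c s ∈
        Submodule.span K (Set.range (graphVertex K G c)) :=
      Submodule.sub_mem _ hx (vn_mem_spanVn K G c s)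
    have hzero := spanVn_inf_lcs1 K G c (by omega : 1 ≤ c) hspan2 hdiff
    rw [hρ' s]
    exact sub_eq_zero.mp hzero
  have hcomp1 : ∀ s, θ (θ' (graphVertex K G c s)) = graphVertex K G c s :=
    main F u u' hu1 hu'1 hu2 hu'2 θ θ' hθv hspanv hθ'v hspanv'
  have hcomp2 : ∀ s, θ' (θ (graphVertex K G c s)) = graphVertex K G c s :=
    main F.symm u' u hu'1 hu1 hu'2
      (fun s => by rw [LieEquiv.symm_symm]; exact hu2 s)
      θ' θ hθ'v hspanv' hθv hspanv
  have hid1 : θ.comp θ' = LieHom.id := nilp_hom_ext K G c (fun s => hcomp1 s)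
  have hid2 : θ'.comp θ = LieHom.id := nilp_hom_ext K G c (fun s => hcomp2 s)
  refine ⟨lieEquivOfHoms K θ θ' (fun x => LieHom.congr_fun hid1 x)
    (fun x => LieHom.congr_fun hid2 x), ?_, ?_⟩
  · apply le_antisymm
    · rintro _ ⟨x, hx, rfl⟩
      exact hom_map_span_le' K θ _ hspanv hx
    · intro x hx
      exact ⟨θ' x, hom_map_span_le' K θ' _ hspanv' hx, LieHom.congr_fun hid1 x⟩
  · intro s
    show F (graphVertex K G c s) - θ (graphVertex K G c s) ∈ _
    rw [hθv s]
    exact hu2 s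

end Graph7

/-- the images in `GL(V)` under the abelianization map `p` of the groups
`T_Γ` (graded automorphisms of `g_Γ^K`), `T_{Γ,c}` (graded automorphisms of `n_{Γ,c}^K`),
`Aut(g_Γ^K)` and `Aut(n_{Γ,c}^K)` all coincide, and `p` is injective on `T_Γ` and on
`T_{Γ,c}`.  Since a graded automorphism is determined on `V` by its values on the
vertices, and the abelianized action of any automorphism is determined by the images of
the vertices modulo the derived ideal `γ₂`, this is expressed as follows (the projection
`g_Γ^K → n_{Γ,c}^K` identifies the two copies of `V`). -/
theorem graded_automorphism_images_agree
    (K : Subfield ℂ) (S : Type) [Fintype S] (G : SimpleGraph S) (c : ℕ) (hc : 1 < c) :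
    -- p is injective on T_Γ :
    (∀ f₁ f₂ : graphLieAlgebra K G ≃ₗ⁅(K : Type)⁆ graphLieAlgebra K G,
      IsGradedAutInf K G f₁ → IsGradedAutInf K G f₂ →
      (∀ s : S, f₁ (graphVertexInf K G s) = f₂ (graphVertexInf K G s)) → f₁ = f₂) ∧
    -- p is injective on T_{Γ,c} :
    (∀ f₁ f₂ : graphNilpotentLieAlgebra K G c ≃ₗ⁅(K : Type)⁆ graphNilpotentLieAlgebra K G c,
      IsGradedAutNil K G c f₁ → IsGradedAutNil K G c f₂ →
      (∀ s : S, f₁ (graphVertex K G c s) = f₂ (graphVertex K G c s)) → f₁ = f₂) ∧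
    -- p(Aut(g_Γ^K)) = p(T_Γ) :
    (∀ F : graphLieAlgebra K G ≃ₗ⁅(K : Type)⁆ graphLieAlgebra K G,
      ∃ f, IsGradedAutInf K G f ∧ ∀ s : S,
        F (graphVertexInf K G s) - f (graphVertexInf K G s) ∈
          LieModule.lowerCentralSeries K (graphLieAlgebra K G) (graphLieAlgebra K G) 1) ∧
    -- p(Aut(n_{Γ,c}^K)) = p(T_{Γ,c}) :
    (∀ F : graphNilpotentLieAlgebra K G c ≃ₗ⁅(K : Type)⁆ graphNilpotentLieAlgebra K G c,
      ∃ f, IsGradedAutNil K G c f ∧ ∀ s : S,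
        F (graphVertex K G c s) - f (graphVertex K G c s) ∈
          LieModule.lowerCentralSeries K (graphNilpotentLieAlgebra K G c)
            (graphNilpotentLieAlgebra K G c) 1) ∧
    -- p(T_Γ) ⊆ p(T_{Γ,c}) (under the identification of the two copies of V) :
    (∀ f, IsGradedAutInf K G f →
      ∃ f', IsGradedAutNil K G c f' ∧ ∀ s : S,
        f' (graphVertex K G c s) =
          LieSubmodule.Quotient.mk' (LieModule.lowerCentralSeries K (graphLieAlgebra K G)
            (graphLieAlgebra K G) c) (f (graphVertexInf K G s))) ∧
    -- p(T_{Γ,c}) ⊆ p(T_Γ) :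
    (∀ f', IsGradedAutNil K G c f' →
      ∃ f, IsGradedAutInf K G f ∧ ∀ s : S,
        f' (graphVertex K G c s) =
          LieSubmodule.Quotient.mk' (LieModule.lowerCentralSeries K (graphLieAlgebra K G)
            (graphLieAlgebra K G) c) (f (graphVertexInf K G s))) := by
  refine ⟨?_, ?_, ?_, ?_, ?_, ?_⟩
  · intro f₁ f₂ _ _ h
    have := graph_hom_ext (K := K) (G := G) (f := f₁.toLieHom) (g := f₂.toLieHom) h
    exact LieEquiv.ext (fun x => LieHom.congr_fun this x)
  · intro f₁ f₂ _ _ h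
    have := nilp_hom_ext (K := K) (G := G) (c := c)
      (f := f₁.toLieHom) (g := f₂.toLieHom) h
    exact LieEquiv.ext (fun x => LieHom.congr_fun this x)
  · intro F
    exact aut_to_graded_inf K G F
  · intro F
    exact aut_to_graded_nil K G c hc F
  · intro f hf
    obtain ⟨f', hf'1, hf'2⟩ := graded_inf_to_nil K G c f hf
    exact ⟨f', hf'1, fun s => hf'2 s⟩
  · intro f' hf'
    obtain ⟨f, hf1, hf2⟩ := graded_nil_to_inf K G c hc f' hf'
    exact ⟨f, hf1, fun s => hf2 s⟩
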